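/- Let P_0 and P_1 be probability distributions on {0,1}^k with matching moments up to degree d, and let γ ∈ [0,1]. Then the γ-noisy versions P̃_0 and P̃_1 of P_0 and P_1 also have matching moments up to degree d. -/

import Mathlib

open MeasureTheory
open scoped ENNReal

noncomputable section

/-- The real value (0 or 1) of a bit. -/
def bval (b : Bool) : ℝ := if b then 1 else 0

/-- The distribution of a biased coin on `Bool` with probability `p` of `true`. -/
def coin (p : ℝ) : Measure Bool :=
  (PMF.bernoulli (min (Real.toNNReal p) 1) (min_le_right _ _)).toMeasure

/-- The `γ`-noisy version of a distribution `μ` on the hypercube: sample `x ~ μ`, then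
independently for each coordinate, with probability `γ` replace it by a uniform random bit. -/
def noisy {ι : Type*} [Fintype ι] (γ : ℝ) (μ : Measure (ι → Bool)) :
    Measure (ι → Bool) :=
  Measure.map
    (fun p : (ι → Bool) × ((ι → Bool) × (ι → Bool)) => fun i =>
      if p.2.1 i then p.2.2 i else p.1 i)
    (μ.prod ((Measure.pi fun _ : ι => coin γ).prod (Measure.pi fun _ : ι => coin (1 / 2))))

/-!
For a fixed outcome `ω = (b, u)` of the noise, the resampled point agrees with `u` on the
coordinates where `b` is set and with `x` elsewhere, so the monomial `∏_{i ∈ S} yᵢ` of the noisy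
point factors as a constant times the monomial of `x` over the unresampled part of `S`, a
multiset of no larger degree. Integrating over `x` first (Fubini), every moment of the noisy
distribution is therefore an average over the noise of moments of `μ` of degree at most `|S|`,
with weights that do not depend on `μ`.
-/

instance isProbabilityMeasure_coin (p : ℝ) : IsProbabilityMeasure (coin p) :=
  PMF.toMeasure.isProbabilityMeasure _

section Hypercube

variable {ι : Type*}

def resample (ω : (ι → Bool) × (ι → Bool)) (x : ι → Bool) : ι → Bool :=
  fun i => if ω.1 i then ω.2 i else x i

theorem prod_map_bval_resample (ω : (ι → Bool) × (ι → Bool)) (x : ι → Bool) (S : Multiset ι) :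
    (S.map fun i => bval (resample ω x i)).prod =
      ((S.filter fun i => ω.1 i).map fun i => bval (ω.2 i)).prod *
        ((S.filter fun i => ¬ω.1 i).map fun i => bval (x i)).prod := by
  conv_lhs => rw [← Multiset.filter_add_not (fun i => ω.1 i) S]
  rw [Multiset.map_add, Multiset.prod_add]
  congr 2 <;>
    exact Multiset.map_congr rfl fun i hi => by simp [resample, (Multiset.mem_filter.mp hi).2]

variable [Fintype ι]

def cubeMoment (μ : Measure (ι → Bool)) (S : Multiset ι) : ℝ :=
  ∫ x, (S.map fun i => bval (x i)).prod ∂μ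

variable (ι) in
/-- The noise `ω = (b, u)` of `noisy γ`: the mask `b` of resampled coordinates and the fresh
uniform bits `u`. -/
def noiseMeasure (γ : ℝ) : Measure ((ι → Bool) × (ι → Bool)) :=
  (Measure.pi fun _ : ι => coin γ).prod (Measure.pi fun _ : ι => coin (1 / 2))

instance isProbabilityMeasure_noiseMeasure (γ : ℝ) : IsProbabilityMeasure (noiseMeasure ι γ) := by
  unfold noiseMeasure; infer_instance

theorem noisy_eq_map_resample (γ : ℝ) (μ : Measure (ι → Bool)) :
    noisy γ μ = (μ.prod (noiseMeasure ι γ)).map fun p => resample p.2 p.1 :=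
  rfl

theorem integral_noisy (γ : ℝ) (μ : Measure (ι → Bool)) [IsFiniteMeasure μ]
    (F : (ι → Bool) → ℝ) :
    ∫ y, F y ∂(noisy γ μ) = ∫ ω, ∫ x, F (resample ω x) ∂μ ∂(noiseMeasure ι γ) := by
  rw [noisy_eq_map_resample, integral_map (measurable_of_countable _).aemeasurable
    (measurable_of_countable _).aestronglyMeasurable, integral_prod_symm _ Integrable.of_finite]

theorem cubeMoment_noisy (γ : ℝ) (μ : Measure (ι → Bool)) [IsFiniteMeasure μ]
    (S : Multiset ι) :
    cubeMoment (noisy γ μ) S =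
      ∫ ω, ((S.filter fun i => ω.1 i).map fun i => bval (ω.2 i)).prod *
        cubeMoment μ (S.filter fun i => ¬ω.1 i) ∂(noiseMeasure ι γ) := by
  simp only [cubeMoment, integral_noisy, prod_map_bval_resample, integral_const_mul]

end Hypercube

theorem stmt_7 (k d : ℕ) (γ : ℝ)
    (P₀ P₁ : Measure (Fin k → Bool)) [IsProbabilityMeasure P₀] [IsProbabilityMeasure P₁]
    (hmom : ∀ S : Multiset (Fin k), Multiset.card S ≤ d →
      ∫ x, (S.map fun i => bval (x i)).prod ∂P₀ =
        ∫ x, (S.map fun i => bval (x i)).prod ∂P₁) :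
    ∀ S : Multiset (Fin k), Multiset.card S ≤ d →
      ∫ y, (S.map fun i => bval (y i)).prod ∂(noisy γ P₀) =
        ∫ y, (S.map fun i => bval (y i)).prod ∂(noisy γ P₁) := by
  intro S hS
  change cubeMoment (noisy γ P₀) S = cubeMoment (noisy γ P₁) S
  rw [cubeMoment_noisy, cubeMoment_noisy]
  congr 1 with ω
  have hdeg : Multiset.card (S.filter fun i => ¬ω.1 i) ≤ d :=
    (Multiset.card_le_card (Multiset.filter_le _ S)).trans hS
  rw [cubeMoment, cubeMoment, hmom _ hdeg]
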